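/- arXiv:2312.13673 — 5 statements merged into one kernel-verified Lean document; each statement's English description precedes it below -/
import Mathlib

section
/- Let K ⊆ ℂ be a connected compact set whose diameter is at most 1. Then for every n ≥ 1 and every monic polynomial p of degree n all of whose zeros lie in K, the unit lemniscate Λ_p = {z ∈ ℂ : |p(z)| < 1} is nonempty and connected. -/
open MeasureTheory Filter Polynomial Metric Set
open scoped Classical ENNReal NNReal Topology

noncomputable section

/-- The logarithmic potential `U_μ(z) = ∫ log|z-w| dμ(w)`, valued in `[-∞, ∞)` (as an `EReal`),
defined as the difference of the positive and negative parts. -/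
def logPotential (μ : Measure ℂ) (z : ℂ) : EReal :=
  ((∫⁻ w, ENNReal.ofReal (Real.log (‖z - w‖)) ∂μ : ℝ≥0∞) : EReal)
    - ((∫⁻ w, ENNReal.ofReal (-Real.log (‖z - w‖)) ∂μ : ℝ≥0∞) : EReal)

/-- The logarithmic energy `I(μ) = ∫∫ log|z-w| dμ(z) dμ(w)`, valued in `EReal`. -/
def energy (μ : Measure ℂ) : EReal :=
  ((∫⁻ q : ℂ × ℂ, ENNReal.ofReal (Real.log (‖q.1 - q.2‖)) ∂(μ.prod μ) : ℝ≥0∞) : EReal)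
    - ((∫⁻ q : ℂ × ℂ, ENNReal.ofReal (-Real.log (‖q.1 - q.2‖)) ∂(μ.prod μ) : ℝ≥0∞) : EReal)

/-- Borel probability measures supported on `K`. -/
def probOn (K : Set ℂ) : Set (Measure ℂ) :=
  {μ | IsProbabilityMeasure μ ∧ μ Kᶜ = 0}

/-- `log c(K) = sup {I(μ) : μ ∈ P(K)}`. -/
def logCapacity (K : Set ℂ) : EReal :=
  ⨆ μ ∈ probOn K, energy μ

/-- The logarithmic capacity `c(K)`, with `c(K) = 0` when the sup of energies is `-∞`. -/
def capacity (K : Set ℂ) : ℝ≥0∞ :=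
  (logCapacity K).exp

/-- The filled unit lemniscate `Λ_p = {z : |p(z)| < 1}`. -/
def lemniscate (p : Polynomial ℂ) : Set ℂ := {z | ‖p.eval z‖ < 1}

/-- The number of connected components of a planar set. -/
def numComponents (S : Set ℂ) : ℕ := Nat.card (ConnectedComponents S)

/-- `𝒫_n(K)`: monic polynomials of degree `n` with all zeros in `K`. -/
def monicProdOn (K : Set ℂ) (n : ℕ) : Set (Polynomial ℂ) :=
  {p | ∃ z : Fin n → ℂ, (∀ j, z j ∈ K) ∧ p = ∏ j, (X - C (z j))}

/-- `𝒞_n(K) = sup {𝒞(Λ_p) : p ∈ 𝒫_n(K)}`. -/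
def maxComponents (K : Set ℂ) (n : ℕ) : ℕ :=
  sSup ((fun p => numComponents (lemniscate p)) '' monicProdOn K n)

/-- `M(K) = limsup 𝒞_n(K)/n`. -/
def MK (K : Set ℂ) : ℝ := limsup (fun n : ℕ => (maxComponents K n : ℝ) / n) atTop

/-- `m(K) = liminf 𝒞_n(K)/n`. -/
def mK (K : Set ℂ) : ℝ := liminf (fun n : ℕ => (maxComponents K n : ℝ) / n) atTop

/-- A bounded Jordan domain: a bounded open connected set whose boundary is the image of an
injective continuous map from the unit circle. -/
def IsJordanDomain (Ω : Set ℂ) : Prop :=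
  IsOpen Ω ∧ IsConnected Ω ∧ Bornology.IsBounded Ω ∧
    ∃ γ : (Metric.sphere (0 : ℂ) 1) → ℂ, Continuous γ ∧ Function.Injective γ ∧
      frontier Ω = Set.range γ

/-- A `C²` Jordan arc: the image of an injective `C²` map on `[0,1]` with nowhere-vanishing
derivative. -/
def IsC2JordanArc (A : Set ℂ) : Prop :=
  ∃ γ : ℝ → ℂ, ContDiff ℝ 2 γ ∧ Set.InjOn γ (Set.Icc 0 1) ∧
    (∀ t ∈ Set.Icc (0 : ℝ) 1, deriv γ t ≠ 0) ∧ A = γ '' Set.Icc 0 1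

/-- A bounded Jordan domain with `C²` boundary: bounded, open, connected, whose boundary is
parametrized by a `C²`, `2π`-periodic map, injective on `[0, 2π)`, with nowhere-vanishing
derivative. -/
def IsC2JordanDomain (Ω : Set ℂ) : Prop :=
  IsOpen Ω ∧ IsConnected Ω ∧ Bornology.IsBounded Ω ∧
    ∃ γ : ℝ → ℂ, ContDiff ℝ 2 γ ∧ Function.Periodic γ (2 * Real.pi) ∧
      Set.InjOn γ (Set.Ico 0 (2 * Real.pi)) ∧ (∀ t, deriv γ t ≠ 0) ∧
      frontier Ω = Set.range γ


/-! Every connected component of `Λ_p` contains a zero of `p`: on a component without zeros,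
`|p|` would attain its minimum over the closure at an interior point, which the minimum modulus
principle forbids for a nonconstant polynomial. When the zeros lie in a set of diameter at most
one, the segments joining them lie in `Λ_p`: every factor `|z - z_k|` is at most `1` along such
a segment, and one of its two endpoints is within `1/2`. Hence all components of `Λ_p` meet one
connected star of segments, so there is only one. -/

theorem Finset.prod_lt_one_of_le_one {ι R : Type*} [CommSemiring R] [LinearOrder R]
    [IsStrictOrderedRing R] {s : Finset ι} {f : ι → R} (h0 : ∀ i ∈ s, 0 ≤ f i)
    (h1 : ∀ i ∈ s, f i ≤ 1) {k : ι} (hk : k ∈ s) (hlt : f k < 1) : ∏ i ∈ s, f i < 1 := by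
  rw [← Finset.mul_prod_erase s f hk]
  calc f k * ∏ i ∈ s.erase k, f i ≤ f k :=
        mul_le_of_le_one_right (h0 k hk) <| Finset.prod_le_one
          (fun i hi => h0 i (Finset.mem_of_mem_erase hi))
          (fun i hi => h1 i (Finset.mem_of_mem_erase hi))
    _ < 1 := hlt

theorem Polynomial.norm_eval_prod_X_sub_C {ι 𝕜 : Type*} [NormedField 𝕜] (s : Finset ι)
    (z : ι → 𝕜) (x : 𝕜) : ‖(∏ k ∈ s, (X - C (z k))).eval x‖ = ∏ k ∈ s, dist x (z k) := by
  simp [eval_prod, dist_eq_norm]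

theorem Polynomial.isRoot_of_isLocalMin_norm_eval {p : ℂ[X]} (hp : 0 < p.degree) {c : ℂ}
    (hc : IsLocalMin (fun z => ‖p.eval z‖) c) : p.IsRoot c := by
  by_contra hroot
  have hmax : IsLocalMax (norm ∘ fun z => (p.eval z)⁻¹) c := by
    filter_upwards [hc] with z hz
    simpa only [Function.comp_apply, norm_inv] using inv_anti₀ (norm_pos_iff.2 hroot) hz
  have hdiff : ∀ᶠ z in 𝓝 c, DifferentiableAt ℂ (fun z => (p.eval z)⁻¹) z := by
    filter_upwards [p.continuous.continuousAt.eventually_ne hroot] with z hz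
    exact p.differentiable.differentiableAt.inv hz
  have hconst : ∀ᶠ z in 𝓝 c, p.eval z = (C (p.eval c)).eval z := by
    filter_upwards [Complex.eventually_eq_of_isLocalMax_norm hdiff hmax] with z hz
    simpa using inv_injective hz
  have hpC : p = C (p.eval c) := eq_of_infinite_eval_eq _ _ (infinite_of_mem_nhds c hconst)
  rw [hpC] at hp
  exact (hp.trans_le degree_C_le).false

theorem isOpen_lemniscate (p : ℂ[X]) : IsOpen (lemniscate p) :=
  isOpen_lt p.continuous.norm continuous_const

theorem exists_isRoot_of_closure_inter_lemniscate_subset {p : ℂ[X]} (hp : 0 < p.degree)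
    {V : Set ℂ} (hVo : IsOpen V) (hVΛ : V ⊆ lemniscate p)
    (hVcl : closure V ∩ lemniscate p ⊆ V) (hV : V.Nonempty) : ∃ r ∈ V, p.IsRoot r := by
  obtain ⟨b, hb⟩ := hV
  have hcocompact : ∀ᶠ z in cocompact ℂ ⊓ 𝓟 (closure V), ‖p.eval b‖ ≤ ‖p.eval z‖ :=
    ((p.tendsto_norm_atTop hp tendsto_norm_cocompact_atTop).eventually_ge_atTop _).filter_mono
      inf_le_left
  obtain ⟨m, hm, hmin⟩ := p.continuous.norm.continuousOn.exists_isMinOn' isClosed_closure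
    (subset_closure hb) hcocompact
  have hmΛ : ‖p.eval m‖ < 1 := (hmin (subset_closure hb)).trans_lt (hVΛ hb)
  have hmV : m ∈ V := hVcl ⟨hm, hmΛ⟩
  exact ⟨m, hmV, p.isRoot_of_isLocalMin_norm_eval hp <|
    hmin.isLocalMin (mem_of_superset (hVo.mem_nhds hmV) subset_closure)⟩

theorem exists_isRoot_mem_connectedComponentIn_lemniscate {p : ℂ[X]} (hp : 0 < p.degree)
    {x : ℂ} (hx : x ∈ lemniscate p) :
    ∃ r ∈ connectedComponentIn (lemniscate p) x, p.IsRoot r := by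
  set V := connectedComponentIn (lemniscate p) x
  have hxV : x ∈ V := mem_connectedComponentIn hx
  have hcl : closure V ∩ lemniscate p ⊆ V := by
    refine IsPreconnected.subset_connectedComponentIn ?_ ⟨subset_closure hxV, hx⟩
      inter_subset_right
    exact isPreconnected_connectedComponentIn.subset_closure
      (fun y hy => ⟨subset_closure hy, connectedComponentIn_subset _ _ hy⟩) inter_subset_left
  exact exists_isRoot_of_closure_inter_lemniscate_subset hp
    (isOpen_lemniscate p).connectedComponentIn (connectedComponentIn_subset _ _) hcl ⟨x, hxV⟩

theorem isConnected_of_forall_connectedComponentIn_inter_nonempty {X : Type*}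
    [TopologicalSpace X] {S T : Set X} (hT : IsPreconnected T) (hTS : T ⊆ S) {t : X}
    (ht : t ∈ T) (h : ∀ x ∈ S, (connectedComponentIn S x ∩ T).Nonempty) : IsConnected S := by
  have hS : S = connectedComponentIn S t := by
    refine Subset.antisymm (fun x hx => ?_) (connectedComponentIn_subset _ _)
    obtain ⟨y, hyx, hyT⟩ := h x hx
    rw [connectedComponentIn_eq (hT.subset_connectedComponentIn ht hTS hyT),
      ← connectedComponentIn_eq hyx]
    exact mem_connectedComponentIn hx
  rw [hS]
  exact isConnected_connectedComponentIn_iff.2 (hTS ht)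

theorem segment_subset_lemniscate_prod_X_sub_C {ι : Type*} [Fintype ι] {z : ι → ℂ}
    (hz : ∀ i j, dist (z i) (z j) ≤ 1) (i j : ι) :
    segment ℝ (z i) (z j) ⊆ lemniscate (∏ k, (X - C (z k))) := by
  intro x hx
  have hle : ∀ k, dist x (z k) ≤ 1 := fun k =>
    mem_closedBall.1 <| (convex_closedBall (z k) 1).segment_subset
      (mem_closedBall'.2 (hz k i)) (mem_closedBall'.2 (hz k j)) hx
  have hsum : dist x (z i) + dist x (z j) ≤ 1 := by
    rw [dist_comm x]
    exact (dist_add_dist_of_mem_segment hx).trans_le (hz i j)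
  obtain ⟨k, hk⟩ : ∃ k, dist x (z k) < 1 := by
    by_contra! h
    linarith [h i, h j]
  show ‖_‖ < 1
  rw [norm_eval_prod_X_sub_C]
  exact Finset.prod_lt_one_of_le_one (fun k _ => dist_nonneg) (fun k _ => hle k)
    (Finset.mem_univ k) hk

theorem statement3_general (K : Set ℂ) (hK : IsCompact K)
    (hdiam : Metric.diam K ≤ 1) (n : ℕ) (hn : 1 ≤ n)
    (p : Polynomial ℂ) (hp : p ∈ monicProdOn K n) :
    (lemniscate p).Nonempty ∧ IsConnected (lemniscate p) := by
  obtain ⟨z, hzK, rfl⟩ := hp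
  have hdeg : 0 < (∏ j, (X - C (z j))).degree := by
    rw [← natDegree_pos_iff_degree_pos, natDegree_finsetProd_X_sub_C_eq_card, Finset.card_univ,
      Fintype.card_fin]
    exact hn
  have hdist : ∀ i j, dist (z i) (z j) ≤ 1 := fun i j =>
    (dist_le_diam_of_mem hK.isBounded (hzK i) (hzK j)).trans hdiam
  let i₀ : Fin n := ⟨0, hn⟩
  let star := ⋃ j, segment ℝ (z i₀) (z j)
  have hstar : IsPreconnected star :=
    isPreconnected_iUnion ⟨z i₀, mem_iInter.2 fun j => left_mem_segment ℝ _ _⟩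
      fun j => (convex_segment _ _).isPreconnected
  have hstarΛ : star ⊆ lemniscate _ :=
    iUnion_subset fun j => segment_subset_lemniscate_prod_X_sub_C hdist i₀ j
  have hi₀ : z i₀ ∈ star := mem_iUnion.2 ⟨i₀, left_mem_segment ℝ _ _⟩
  refine ⟨⟨z i₀, hstarΛ hi₀⟩,
    isConnected_of_forall_connectedComponentIn_inter_nonempty hstar hstarΛ hi₀ fun x hx => ?_⟩
  obtain ⟨r, hr, hroot⟩ := exists_isRoot_mem_connectedComponentIn_lemniscate hdeg hx
  obtain ⟨j, -, hj⟩ := (isRoot_prod _ _ _).1 hroot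
  rw [root_X_sub_C] at hj
  exact ⟨r, hr, mem_iUnion.2 ⟨j, hj ▸ right_mem_segment ℝ _ _⟩⟩

/-- If `K` is connected and compact with diameter at most `1`, then for every
`n ≥ 1` and every monic polynomial of degree `n` with all zeros in `K`, the unit lemniscate is
nonempty and connected. -/
theorem statement3 (K : Set ℂ) (hK : IsCompact K) (hconn : IsConnected K)
    (hdiam : Metric.diam K ≤ 1) (n : ℕ) (hn : 1 ≤ n)
    (p : Polynomial ℂ) (hp : p ∈ monicProdOn K n) :
    (lemniscate p).Nonempty ∧ IsConnected (lemniscate p) :=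
  statement3_general K hK hdiam n hn p hp
end
end

section
/- Let p be a nonconstant complex polynomial and r > 0, and let Λ_{p,r} = {z ∈ ℂ : |p(z)| < r}. If U₁ and U₂ are two distinct connected components of Λ_{p,r} and z₀ is a point lying in the closure of U₁ and in the closure of U₂, then p′(z₀) = 0. -/
open MeasureTheory Filter Polynomial Metric Set
open scoped Classical ENNReal NNReal Topology

noncomputable section

/-!
Where `p' ≠ 0`, the polynomial `p` is a local homeomorphism, so near `z₀` the lemniscate
`p ⁻¹' ball 0 r` is the homeomorphic image of the convex set `ball (p z₀) δ ∩ ball 0 r`. Hence a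
small neighbourhood of `z₀` meets only one component of the lemniscate, and `z₀` cannot lie in the
closure of two of them.
-/

theorem connectedComponentIn_eq_of_mem_closure_of_nhds_inter_subset {X : Type*}
    [TopologicalSpace X] {U V N : Set X} {x y z : X} (hVU : V ⊆ U) (hV : IsPreconnected V)
    (hN : N ∈ 𝓝 z) (hNV : N ∩ U ⊆ V) (hx : z ∈ closure (connectedComponentIn U x))
    (hy : z ∈ closure (connectedComponentIn U y)) :
    connectedComponentIn U x = connectedComponentIn U y := by
  obtain ⟨a, haN, hax⟩ := mem_closure_iff_nhds.1 hx N hN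
  obtain ⟨b, hbN, hby⟩ := mem_closure_iff_nhds.1 hy N hN
  have haV : a ∈ V := hNV ⟨haN, connectedComponentIn_subset U x hax⟩
  have hbV : b ∈ V := hNV ⟨hbN, connectedComponentIn_subset U y hby⟩
  have hba : b ∈ connectedComponentIn U a := hV.subset_connectedComponentIn haV hVU hbV
  rw [connectedComponentIn_eq hax, connectedComponentIn_eq hby, connectedComponentIn_eq hba]

theorem OpenPartialHomeomorph.exists_isPreconnected_nhds_inter_preimage_subset {X F : Type*}
    [TopologicalSpace X] [NormedAddCommGroup F] [NormedSpace ℝ F] (Φ : OpenPartialHomeomorph X F)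
    {S : Set F} (hS : Convex ℝ S) {z : X} (hz : z ∈ Φ.source) :
    ∃ V ⊆ Φ ⁻¹' S, IsPreconnected V ∧ ∃ N ∈ 𝓝 z, N ∩ Φ ⁻¹' S ⊆ V := by
  obtain ⟨δ, hδ, hball⟩ := Metric.isOpen_iff.1 Φ.open_target (Φ z) (Φ.map_source hz)
  have hDtarget : ball (Φ z) δ ∩ S ⊆ Φ.target := inter_subset_left.trans hball
  refine ⟨Φ.symm '' (ball (Φ z) δ ∩ S), ?_, ?_, Φ.source ∩ Φ ⁻¹' ball (Φ z) δ, ?_, ?_⟩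
  · rintro _ ⟨w, hw, rfl⟩
    rw [mem_preimage, Φ.right_inv (hDtarget hw)]
    exact hw.2
  · exact ((convex_ball _ _).inter hS).isPreconnected.image _
      (Φ.continuousOn_symm.mono hDtarget)
  · exact inter_mem (Φ.open_source.mem_nhds hz)
      ((Φ.continuousAt hz).preimage_mem_nhds (ball_mem_nhds _ hδ))
  · rintro x ⟨⟨hxsource, hxball⟩, hxS⟩
    exact ⟨Φ x, ⟨hxball, hxS⟩, Φ.left_inv hxsource⟩

theorem HasStrictDerivAt.connectedComponentIn_preimage_eq_of_mem_closure {𝕜 : Type*} [RCLike 𝕜]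
    {f : 𝕜 → 𝕜} {f' x y z : 𝕜} {S : Set 𝕜} (hf : HasStrictDerivAt f f' z) (hf' : f' ≠ 0)
    (hS : Convex ℝ S) (hx : z ∈ closure (connectedComponentIn (f ⁻¹' S) x))
    (hy : z ∈ closure (connectedComponentIn (f ⁻¹' S) y)) :
    connectedComponentIn (f ⁻¹' S) x = connectedComponentIn (f ⁻¹' S) y := by
  have hequiv := hf.hasStrictFDerivAt_equiv hf'
  set Φ := hequiv.toOpenPartialHomeomorph f
  have hΦ : (Φ : 𝕜 → 𝕜) = f := hequiv.toOpenPartialHomeomorph_coe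
  obtain ⟨V, hVS, hV, N, hN, hNV⟩ :=
    Φ.exists_isPreconnected_nhds_inter_preimage_subset hS hequiv.mem_toOpenPartialHomeomorph_source
  rw [hΦ] at hVS hNV
  exact connectedComponentIn_eq_of_mem_closure_of_nhds_inter_subset hVS hV hN hNV hx hy

theorem statement11_general (p : Polynomial ℂ) (r : ℝ)
    (z₁ z₂ z₀ : ℂ)
    (hne : connectedComponentIn {z : ℂ | ‖p.eval z‖ < r} z₁ ≠
      connectedComponentIn {z : ℂ | ‖p.eval z‖ < r} z₂)
    (hz₀₁ : z₀ ∈ closure (connectedComponentIn {z : ℂ | ‖p.eval z‖ < r} z₁))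
    (hz₀₂ : z₀ ∈ closure (connectedComponentIn {z : ℂ | ‖p.eval z‖ < r} z₂)) :
    p.derivative.eval z₀ = 0 := by
  have hΛ : {z : ℂ | ‖p.eval z‖ < r} = (fun z => p.eval z) ⁻¹' ball 0 r := by ext; simp
  rw [hΛ] at hne hz₀₁ hz₀₂
  by_contra hp'
  exact hne ((p.hasStrictDerivAt z₀).connectedComponentIn_preimage_eq_of_mem_closure hp'
    (convex_ball 0 r) hz₀₁ hz₀₂)

/-- If two distinct connected components of the `r`-lemniscate of a nonconstant
polynomial `p` have a common closure point `z₀`, then `p'(z₀) = 0`. -/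
theorem statement11 (p : Polynomial ℂ) (hp : 1 ≤ p.natDegree) (r : ℝ) (hr : 0 < r)
    (z₁ z₂ z₀ : ℂ)
    (h₁ : z₁ ∈ {z : ℂ | ‖p.eval z‖ < r})
    (h₂ : z₂ ∈ {z : ℂ | ‖p.eval z‖ < r})
    (hne : connectedComponentIn {z : ℂ | ‖p.eval z‖ < r} z₁ ≠
      connectedComponentIn {z : ℂ | ‖p.eval z‖ < r} z₂)
    (hz₀₁ : z₀ ∈ closure (connectedComponentIn {z : ℂ | ‖p.eval z‖ < r} z₁))
    (hz₀₂ : z₀ ∈ closure (connectedComponentIn {z : ℂ | ‖p.eval z‖ < r} z₂)) :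
    p.derivative.eval z₀ = 0 :=
  statement11_general p r z₁ z₂ z₀ hne hz₀₁ hz₀₂
end
end

section
/- Let K ⊆ ℂ be a compact set and let (μ_n) be a sequence of Borel probability measures supported in K converging in the weak-* topology to a Borel probability measure μ. Then for every nonempty compact set F ⊆ ℂ, limsup_{n→∞} sup_{z ∈ F} U_{μ_n}(z) ≤ sup_{z ∈ F} U_μ(z), where the potentials are regarded as functions with values in [−∞, ∞). -/
open MeasureTheory Filter Polynomial Metric Set
open scoped Classical ENNReal NNReal Topology

noncomputable section

/-!
The weak limit `μ` is again carried by `K`, so for `z ∈ F` the kernels `log ‖z - w‖` are bounded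
above by a constant `C` on the supports of all the measures involved. Replace `log ‖z - w‖` by the
continuous, bounded, `exp j`-Lipschitz kernels `logKernelApprox C j (z - w)`, which decrease to it.
By monotone convergence their `μ`-potentials decrease pointwise to `U_μ`, and since they are
continuous, Dini's argument on the compact `F` makes a single one of them smaller than a given
`u > sup_F U_μ` on all of `F`. For this fixed `j`, the `μ_n`-potentials of the kernel are
equi-Lipschitz in `z` and converge pointwise by weak-* convergence, hence uniformly on `F`; and
they dominate `U_{μ_n}`.
-/

lemma Real.abs_log_add_sub_log_add_le {c a b : ℝ} (hc : 0 < c) (ha : 0 ≤ a) (hb : 0 ≤ b) :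
    |Real.log (c + a) - Real.log (c + b)| ≤ c⁻¹ * |a - b| := by
  have hderiv : ∀ t ∈ Ici (0 : ℝ),
      HasDerivWithinAt (fun t => Real.log (c + t)) (c + t)⁻¹ (Ici 0) t := fun t ht => by
    simpa using (((hasDerivAt_id t).const_add c).log (add_pos_of_pos_of_nonneg hc ht).ne')
      |>.hasDerivWithinAt
  have hbound : ∀ t ∈ Ici (0 : ℝ), ‖(c + t)⁻¹‖ ≤ c⁻¹ := fun t ht => by
    rw [Real.norm_eq_abs, abs_inv, abs_of_pos (add_pos_of_pos_of_nonneg hc ht)]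
    exact inv_anti₀ hc (le_add_of_nonneg_right ht)
  simpa [Real.norm_eq_abs] using
    (convex_Ici 0).norm_image_sub_le_of_norm_hasDerivWithin_le hderiv hbound hb ha

section LogKernelApprox

variable {E : Type*} [SeminormedAddCommGroup E]

/-- Decreases to `min (log ‖x‖) C` as `j → ∞`. The second branch of the max makes the value at
`x = 0` equal to `min 0 C`, matching the junk value `Real.log 0 = 0`. -/
def logKernelApprox (C : ℝ) (j : ℕ) (x : E) : ℝ :=
  min (max (Real.log (Real.exp (-j) + ‖x‖)) (-(Real.exp j * ‖x‖))) C

lemma lipschitzWith_logKernelApprox (C : ℝ) (j : ℕ) :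
    LipschitzWith (Real.toNNReal (Real.exp j)) (logKernelApprox C j : E → ℝ) := by
  have hnorm (x y : E) : Real.exp j * |‖x‖ - ‖y‖| ≤ Real.exp j * dist x y :=
    mul_le_mul_of_nonneg_left ((abs_norm_sub_norm_le x y).trans_eq (dist_eq_norm x y).symm)
      (Real.exp_pos _).le
  have hlog : LipschitzWith (Real.toNNReal (Real.exp j))
      fun x : E => Real.log (Real.exp (-j) + ‖x‖) := by
    refine LipschitzWith.of_dist_le_mul fun x y => ?_
    rw [Real.dist_eq, Real.coe_toNNReal _ (Real.exp_pos _).le]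
    calc _ ≤ (Real.exp (-j))⁻¹ * |‖x‖ - ‖y‖| :=
          Real.abs_log_add_sub_log_add_le (Real.exp_pos _) (norm_nonneg x) (norm_nonneg y)
      _ ≤ Real.exp j * dist x y := by rw [← Real.exp_neg, neg_neg]; exact hnorm x y
  have hlin : LipschitzWith (Real.toNNReal (Real.exp j)) fun x : E => -(Real.exp j * ‖x‖) := by
    refine LipschitzWith.of_dist_le_mul fun x y => ?_
    rw [Real.dist_eq, Real.coe_toNNReal _ (Real.exp_pos _).le,
      show -(Real.exp j * ‖x‖) - -(Real.exp j * ‖y‖) = Real.exp j * (‖y‖ - ‖x‖) by ring,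
      abs_mul, abs_of_pos (Real.exp_pos _), abs_sub_comm]
    exact hnorm x y
  have h := (hlog.max hlin).min_const C
  rwa [max_self] at h

lemma abs_logKernelApprox_le (C : ℝ) (j : ℕ) (x : E) : |logKernelApprox C j x| ≤ j + |C| := by
  have hlower : -(j : ℝ) ≤ Real.log (Real.exp (-j) + ‖x‖) :=
    calc -(j : ℝ) = Real.log (Real.exp (-j)) := (Real.log_exp _).symm
      _ ≤ _ := Real.log_le_log (Real.exp_pos _) (le_add_of_nonneg_right (norm_nonneg x))
  have hj : (0 : ℝ) ≤ j := j.cast_nonneg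
  refine abs_le.2 ⟨le_min ?_ (by linarith [neg_abs_le C]),
    (min_le_right _ _).trans (by linarith [le_abs_self C])⟩
  calc -(j + |C|) ≤ -(j : ℝ) := by linarith [abs_nonneg C]
    _ ≤ _ := hlower.trans (le_max_left _ _)

lemma antitone_logKernelApprox (C : ℝ) (x : E) : Antitone fun j => logKernelApprox C j x := by
  refine antitone_nat_of_succ_le fun j => min_le_min_right C (max_le_max ?_ ?_)
  · refine Real.log_le_log (by positivity) (add_le_add_left (Real.exp_le_exp.2 ?_) _)
    push_cast; linarith
  · exact neg_le_neg (mul_le_mul_of_nonneg_right (Real.exp_le_exp.2 (by push_cast; linarith))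
      (norm_nonneg x))

lemma log_norm_le_logKernelApprox {C : ℝ} {x : E} (hx : Real.log ‖x‖ ≤ C) (j : ℕ) :
    Real.log ‖x‖ ≤ logKernelApprox C j x := by
  refine le_min ?_ hx
  rcases (norm_nonneg x).eq_or_lt with h0 | hpos
  · simp [← h0]
  · exact (Real.log_le_log hpos (le_add_of_nonneg_left (Real.exp_pos _).le)).trans
      (le_max_left _ _)

lemma tendsto_logKernelApprox {C : ℝ} {x : E} (hx : Real.log ‖x‖ ≤ C) :
    Tendsto (fun j => logKernelApprox C j x) atTop (𝓝 (Real.log ‖x‖)) := by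
  rcases (norm_nonneg x).eq_or_lt with h0 | hpos
  · have hC : 0 ≤ C := by simpa [← h0] using hx
    simp [logKernelApprox, ← h0, hC]
  have hlin : Tendsto (fun j : ℕ => -(Real.exp j * ‖x‖)) atTop atBot :=
    tendsto_neg_atTop_atBot.comp <|
      (Real.tendsto_exp_atTop.comp tendsto_natCast_atTop_atTop).atTop_mul_const hpos
  have hlog : Tendsto (fun j : ℕ => Real.log (Real.exp (-j) + ‖x‖)) atTop (𝓝 (Real.log ‖x‖)) := by
    have hexp : Tendsto (fun j : ℕ => Real.exp (-j) + ‖x‖) atTop (𝓝 (0 + ‖x‖)) :=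
      (Real.tendsto_exp_atBot.comp <|
        tendsto_neg_atTop_atBot.comp tendsto_natCast_atTop_atTop).add_const _
    rw [zero_add] at hexp
    exact (Real.continuousAt_log hpos.ne').tendsto.comp hexp
  have hev : ∀ᶠ j : ℕ in atTop,
      logKernelApprox C j x = min (Real.log (Real.exp (-j) + ‖x‖)) C := by
    filter_upwards [hlin.eventually_le_atBot (Real.log ‖x‖)] with j hj
    rw [logKernelApprox, max_eq_left (hj.trans (Real.log_le_log hpos
      (le_add_of_nonneg_left (Real.exp_pos _).le)))]
  simpa [min_eq_left hx] using (hlog.min tendsto_const_nhds).congr' (hev.mono fun j hj => hj.symm)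

lemma continuous_logKernelApprox_sub (C : ℝ) (j : ℕ) (z : E) :
    Continuous fun w => logKernelApprox C j (z - w) :=
  (lipschitzWith_logKernelApprox C j).continuous.comp (continuous_const.sub continuous_id)

end LogKernelApprox

section ERealIntegral

variable {α : Type*} [MeasurableSpace α] {μ : Measure α} {f g : α → ℝ}

/-- `logPotential μ z` is by definition `erealIntegral μ (fun w => Real.log ‖z - w‖)`. -/
def erealIntegral (μ : Measure α) (f : α → ℝ) : EReal :=
  ((∫⁻ w, ENNReal.ofReal (f w) ∂μ : ℝ≥0∞) : EReal)
    - ((∫⁻ w, ENNReal.ofReal (-f w) ∂μ : ℝ≥0∞) : EReal)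

lemma erealIntegral_mono (hfg : f ≤ᵐ[μ] g) : erealIntegral μ f ≤ erealIntegral μ g :=
  EReal.sub_le_sub
    (EReal.coe_ennreal_le_coe_ennreal_iff.2 <|
      lintegral_mono_ae <| hfg.mono fun _ h => ENNReal.ofReal_le_ofReal h)
    (EReal.coe_ennreal_le_coe_ennreal_iff.2 <|
      lintegral_mono_ae <| hfg.mono fun _ h => ENNReal.ofReal_le_ofReal (neg_le_neg h))

lemma MeasureTheory.Integrable.erealIntegral_eq (hf : Integrable f μ) :
    erealIntegral μ f = ∫ w, f w ∂μ := by
  rw [integral_eq_lintegral_pos_part_sub_lintegral_neg_part hf, EReal.coe_sub,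
    EReal.coe_ennreal_toReal, EReal.coe_ennreal_toReal, erealIntegral]
  · exact (hf.neg.lintegral_lt_top).ne
  · exact (hf.lintegral_lt_top).ne

lemma tendsto_erealIntegral_of_antitone {g : ℕ → α → ℝ} (hg : ∀ j, AEMeasurable (g j) μ)
    (hanti : ∀ᵐ w ∂μ, Antitone fun j => g j w)
    (hlim : ∀ᵐ w ∂μ, Tendsto (fun j => g j w) atTop (𝓝 (f w)))
    (hfin : ∫⁻ w, ENNReal.ofReal (g 0 w) ∂μ ≠ ∞) :
    Tendsto (fun j => erealIntegral μ (g j)) atTop (𝓝 (erealIntegral μ f)) := by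
  have hpos : Tendsto (fun j => ∫⁻ w, ENNReal.ofReal (g j w) ∂μ) atTop
      (𝓝 (∫⁻ w, ENNReal.ofReal (f w) ∂μ)) :=
    lintegral_tendsto_of_tendsto_of_antitone (fun j => (hg j).ennreal_ofReal)
      (hanti.mono fun _ h _ _ hij => ENNReal.ofReal_le_ofReal (h hij)) hfin
      (hlim.mono fun _ h => (ENNReal.continuous_ofReal.tendsto _).comp h)
  have hneg : Tendsto (fun j => ∫⁻ w, ENNReal.ofReal (-g j w) ∂μ) atTop
      (𝓝 (∫⁻ w, ENNReal.ofReal (-f w) ∂μ)) :=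
    lintegral_tendsto_of_tendsto_of_monotone (fun j => (hg j).neg.ennreal_ofReal)
      (hanti.mono fun _ h _ _ hij => ENNReal.ofReal_le_ofReal (neg_le_neg (h hij)))
      (hlim.mono fun _ h => (ENNReal.continuous_ofReal.tendsto _).comp h.neg)
  have hfin' : ∫⁻ w, ENNReal.ofReal (f w) ∂μ ≠ ∞ :=
    ne_top_of_le_ne_top hfin <| lintegral_mono_ae <| (hanti.and hlim).mono fun _ h =>
      ENNReal.ofReal_le_ofReal (h.1.le_of_tendsto h.2 0)
  have hsub : ContinuousAt (fun p : EReal × EReal => p.1 + -p.2)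
      ((∫⁻ w, ENNReal.ofReal (f w) ∂μ : ℝ≥0∞), (∫⁻ w, ENNReal.ofReal (-f w) ∂μ : ℝ≥0∞)) :=
    (EReal.continuousAt_add (Or.inl (by simpa using hfin')) (Or.inr (by simp))).comp
      (continuous_fst.prodMk (continuous_neg.comp continuous_snd)).continuousAt
  exact hsub.tendsto.comp (((continuous_coe_ennreal_ereal.tendsto _).comp hpos).prodMk_nhds
    ((continuous_coe_ennreal_ereal.tendsto _).comp hneg))

end ERealIntegral

theorem IsCompact.exists_forall_lt_of_antitone {X β : Type*} [TopologicalSpace X] [LinearOrder β]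
    [TopologicalSpace β] [OrderClosedTopology β] {F : Set X} (hF : IsCompact F)
    {f : ℕ → X → β} (hf : ∀ j, Continuous (f j)) (hanti : ∀ x, Antitone fun j => f j x) {u : β}
    (hu : ∀ x ∈ F, ∃ j, f j x < u) : ∃ j, ∀ x ∈ F, f j x < u :=
  hF.elim_directed_cover (fun j => {x | f j x < u}) (fun j => isOpen_lt (hf j) continuous_const)
    (fun x hx => mem_iUnion.2 (hu x hx))
    (Monotone.directed_le fun _ _ hij _ hx => (hanti _ hij).trans_lt hx)

theorem lipschitzWith_integral {X α G : Type*} [PseudoMetricSpace X] [MeasurableSpace α]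
    [NormedAddCommGroup G] [NormedSpace ℝ G] {ν : Measure α} [IsProbabilityMeasure ν]
    {f : X → α → G} {K : ℝ≥0} (hf : ∀ w, LipschitzWith K fun z => f z w)
    (hint : ∀ z, Integrable (f z) ν) : LipschitzWith K fun z => ∫ w, f z w ∂ν := by
  refine LipschitzWith.of_dist_le_mul fun z z' => ?_
  rw [dist_eq_norm, ← integral_sub (hint z) (hint z')]
  simpa using norm_integral_le_of_norm_le_const (μ := ν)
    (ae_of_all _ fun w => ((hf w).dist_le_mul z z').trans_eq' (dist_eq_norm _ _))

theorem tendstoUniformlyOn_of_lipschitzWith {ι X β : Type*} [PseudoMetricSpace X]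
    [PseudoMetricSpace β] {L : Filter ι} {F : Set X} (hF : IsCompact F) {Φ : ι → X → β}
    {φ : X → β} {K : ℝ≥0} (hΦ : ∀ i, LipschitzWith K (Φ i))
    (hlim : ∀ x ∈ F, Tendsto (fun i => Φ i x) L (𝓝 (φ x))) : TendstoUniformlyOn Φ φ L F := by
  have : CompactSpace F := isCompact_iff_compactSpace.mp hF
  have hequi : Equicontinuous fun i (x : F) => Φ i x :=
    (LipschitzWith.uniformEquicontinuous _ K fun i =>
      ((hΦ i).comp (LipschitzWith.subtype_val F)).weaken (mul_one K).le).equicontinuous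
  rw [tendstoUniformlyOn_iff_tendstoUniformly_comp_coe]
  exact UniformFun.tendsto_iff_tendstoUniformly.1 <|
    (hequi.tendsto_uniformFun_iff_pi L _).2 (tendsto_pi_nhds.2 fun x => hlim x x.2)

theorem MeasureTheory.ProbabilityMeasure.measure_compl_eq_zero_of_tendsto {Ω ι : Type*}
    [MeasurableSpace Ω] [TopologicalSpace Ω] [OpensMeasurableSpace Ω] [HasOuterApproxClosed Ω]
    {L : Filter ι} [L.NeBot] {μs : ι → ProbabilityMeasure Ω} {μ : ProbabilityMeasure Ω}
    (hμ : Tendsto μs L (𝓝 μ)) {K : Set Ω} (hK : IsClosed K)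
    (hμs : ∀ i, (μs i : Measure Ω) Kᶜ = 0) : (μ : Measure Ω) Kᶜ = 0 := by
  have hone : ∀ i, (μs i : Measure Ω) K = 1 := fun i =>
    (prob_compl_eq_zero_iff hK.measurableSet).1 (hμs i)
  rw [prob_compl_eq_zero_iff hK.measurableSet]
  refine le_antisymm prob_le_one ?_
  simpa [hone] using ProbabilityMeasure.limsup_measure_closed_le_of_tendsto hμ hK

section IntegralLogKernelApprox

variable {E : Type*} [SeminormedAddCommGroup E] [MeasurableSpace E] [OpensMeasurableSpace E]

lemma integrable_logKernelApprox_sub (C : ℝ) (j : ℕ) (z : E) (ν : Measure E) [IsFiniteMeasure ν] :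
    Integrable (fun w => logKernelApprox C j (z - w)) ν :=
  .of_bound (continuous_logKernelApprox_sub C j z).aestronglyMeasurable (j + |C|)
    (ae_of_all _ fun w => abs_logKernelApprox_le C j (z - w))

lemma lipschitzWith_integral_logKernelApprox_sub (C : ℝ) (j : ℕ) (ν : Measure E)
    [IsProbabilityMeasure ν] :
    LipschitzWith (Real.toNNReal (Real.exp j)) fun z => ∫ w, logKernelApprox C j (z - w) ∂ν := by
  refine lipschitzWith_integral (fun w => ?_) fun z => integrable_logKernelApprox_sub C j z ν
  exact ((lipschitzWith_logKernelApprox C j).comp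
    (IsometryEquiv.subRight w).isometry.lipschitz).weaken (mul_one _).le

lemma tendstoUniformlyOn_integral_logKernelApprox_sub {ι : Type*} {L : Filter ι}
    {μs : ι → Measure E} [∀ i, IsProbabilityMeasure (μs i)] {μ : Measure E} [IsProbabilityMeasure μ]
    (hconv : ∀ f : BoundedContinuousFunction E ℝ,
      Tendsto (fun i => ∫ w, f w ∂μs i) L (𝓝 (∫ w, f w ∂μ)))
    {F : Set E} (hF : IsCompact F) (C : ℝ) (j : ℕ) :
    TendstoUniformlyOn (fun i z => ∫ w, logKernelApprox C j (z - w) ∂μs i)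
      (fun z => ∫ w, logKernelApprox C j (z - w) ∂μ) L F :=
  tendstoUniformlyOn_of_lipschitzWith hF (fun _ => lipschitzWith_integral_logKernelApprox_sub C j _)
    fun z _ => hconv <| .ofNormedAddCommGroup _ (continuous_logKernelApprox_sub C j z) (j + |C|)
      fun w => abs_logKernelApprox_le C j (z - w)

end IntegralLogKernelApprox

section LogPotential

variable {μ : Measure ℂ} {C : ℝ} {z : ℂ}

lemma logPotential_le_integral_logKernelApprox [IsFiniteMeasure μ]
    (hC : ∀ᵐ w ∂μ, Real.log ‖z - w‖ ≤ C) (j : ℕ) :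
    logPotential μ z ≤ ∫ w, logKernelApprox C j (z - w) ∂μ := by
  rw [← (integrable_logKernelApprox_sub C j z μ).erealIntegral_eq]
  exact erealIntegral_mono (hC.mono fun w hw => log_norm_le_logKernelApprox hw j)

lemma tendsto_integral_logKernelApprox [IsFiniteMeasure μ] (hC : ∀ᵐ w ∂μ, Real.log ‖z - w‖ ≤ C) :
    Tendsto (fun j => ((∫ w, logKernelApprox C j (z - w) ∂μ : ℝ) : EReal)) atTop
      (𝓝 (logPotential μ z)) := by
  simp_rw [← (integrable_logKernelApprox_sub C _ z μ).erealIntegral_eq]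
  exact tendsto_erealIntegral_of_antitone
    (fun j => (continuous_logKernelApprox_sub C j z).aemeasurable)
    (ae_of_all _ fun w => antitone_logKernelApprox C (z - w))
    (hC.mono fun w hw => tendsto_logKernelApprox hw)
    (integrable_logKernelApprox_sub C 0 z μ).lintegral_lt_top.ne

lemma exists_forall_integral_logKernelApprox_lt [IsProbabilityMeasure μ] {F : Set ℂ}
    (hF : IsCompact F) {u : ℝ} (hC : ∀ z ∈ F, ∀ᵐ w ∂μ, Real.log ‖z - w‖ ≤ C)
    (hu : ∀ z ∈ F, logPotential μ z < u) :
    ∃ j, ∀ z ∈ F, ∫ w, logKernelApprox C j (z - w) ∂μ < u :=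
  hF.exists_forall_lt_of_antitone
    (fun j => (lipschitzWith_integral_logKernelApprox_sub C j μ).continuous)
    (fun z _ _ hij => integral_mono (integrable_logKernelApprox_sub C _ z μ)
      (integrable_logKernelApprox_sub C _ z μ) fun w => antitone_logKernelApprox C (z - w) hij)
    fun z hz => ((tendsto_integral_logKernelApprox (hC z hz)).eventually_lt_const
      (hu z hz)).exists.imp fun _ => EReal.coe_lt_coe_iff.1

end LogPotential

theorem statement13_general (K : Set ℂ) (hK : IsCompact K)
    (μs : ℕ → Measure ℂ) (hμs : ∀ n, μs n ∈ probOn K)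
    (μ : Measure ℂ) (hμ : IsProbabilityMeasure μ)
    (hconv : ∀ f : BoundedContinuousFunction ℂ ℝ,
      Tendsto (fun n => ∫ z, f z ∂(μs n)) atTop (nhds (∫ z, f z ∂μ)))
    (F : Set ℂ) (hF : IsCompact F) :
    limsup (fun n => ⨆ z ∈ F, logPotential (μs n) z) atTop ≤ ⨆ z ∈ F, logPotential μ z := by
  have : ∀ n, IsProbabilityMeasure (μs n) := fun n => (hμs n).1
  have hμK : μ Kᶜ = 0 :=
    ProbabilityMeasure.measure_compl_eq_zero_of_tendsto (μs := fun n => ⟨μs n, (hμs n).1⟩)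
      (μ := ⟨μ, hμ⟩) (ProbabilityMeasure.tendsto_iff_forall_integral_tendsto.2 hconv)
      hK.isClosed fun n => (hμs n).2
  obtain ⟨C, hC⟩ := (hF.isBounded.sub hK.isBounded).exists_norm_le
  have hlogC : ∀ ν : Measure ℂ, ν Kᶜ = 0 → ∀ z ∈ F, ∀ᵐ w ∂ν, Real.log ‖z - w‖ ≤ C :=
    fun ν hν z hz => (show ∀ᵐ w ∂ν, w ∈ K from mem_ae_iff.2 hν).mono fun w hw =>
      (Real.log_le_self (norm_nonneg _)).trans (hC _ (sub_mem_sub hz hw))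
  refine le_of_forall_gt_imp_ge_of_dense fun t ht => ?_
  obtain ⟨u, hTu, hut⟩ := EReal.exists_between_coe_real ht
  obtain ⟨v, huv, hvt⟩ := EReal.exists_between_coe_real hut
  obtain ⟨j, hj⟩ := exists_forall_integral_logKernelApprox_lt hF (hlogC μ hμK)
    fun z hz => (le_iSup₂ (f := fun z _ => logPotential μ z) z hz).trans_lt hTu
  have hunif := Metric.tendstoUniformlyOn_iff.1
    (tendstoUniformlyOn_integral_logKernelApprox_sub hconv hF C j) (v - u)
    (sub_pos.2 (EReal.coe_lt_coe_iff.1 huv))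
  refine limsup_le_of_le (by isBoundedDefault) ?_
  filter_upwards [hunif] with n hn
  refine iSup₂_le fun z hz =>
    (logPotential_le_integral_logKernelApprox (hlogC _ (hμs n).2 z hz) j).trans ?_
  refine (EReal.coe_le_coe_iff.2 ?_).trans hvt.le
  have hlt := hj z hz
  have hclose := (abs_sub_lt_iff.1 ((Real.dist_eq _ _).symm.trans_lt (hn z hz))).2
  linarith

/-- If probability measures `μ_n` supported in a compact `K` converge weak-* to
`μ`, then for every nonempty compact `F`,
`limsup_n sup_F U_{μ_n} ≤ sup_F U_μ` (potentials valued in `[-∞, ∞)`). -/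
theorem statement13 (K : Set ℂ) (hK : IsCompact K)
    (μs : ℕ → Measure ℂ) (hμs : ∀ n, μs n ∈ probOn K)
    (μ : Measure ℂ) (hμ : IsProbabilityMeasure μ)
    (hconv : ∀ f : BoundedContinuousFunction ℂ ℝ,
      Tendsto (fun n => ∫ z, f z ∂(μs n)) atTop (nhds (∫ z, f z ∂μ)))
    (F : Set ℂ) (hF : IsCompact F) (hFne : F.Nonempty) :
    limsup (fun n => ⨆ z ∈ F, logPotential (μs n) z) atTop ≤ ⨆ z ∈ F, logPotential μ z :=
  statement13_general K hK μs hμs μ hμ hconv F hF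
end
end

section
/- Let K ⊆ ℂ be a compact set with diameter d > 0 and let μ be a Borel probability measure on K such that for some constants ε₁, ε₂, M₁, M₂ ∈ (0, ∞) one has M₁·r^{ε₁} ≤ μ(B(z,r)) ≤ M₂·r^{ε₂} for every z ∈ K and every 0 < r ≤ d, where B(z,r) is the open disk of radius r about z. Then for every real p ≥ 1 there exist constants C₁, C₂ > 0 (depending only on d, p, ε₁, ε₂, M₁, M₂) such that C₁ ≤ ∫_K |log|z − w||^p dμ(w) ≤ C₂ for every z ∈ K. -/
open MeasureTheory Filter Polynomial Metric Set
open scoped Classical ENNReal NNReal Topology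

noncomputable section

/-!
Below scale `1/2` the lower mass bound puts mass at least `M₁ r^{ε₁}` in a punctured disk
where `|log|z - w|| ≥ log 2` (the upper bound rules out an atom at `z`). For the upper bound,
`|log t|^p ≤ (2p/ε₂)^p t^{-ε₂/2} + |log d|^p` for `0 ≤ t ≤ d`, and the layer-cake formula
together with `μ(B(z,r)) ≲ r^{ε₂}` bounds `∫ |z - w|^{-ε₂/2} dμ(w)` uniformly in `z`.
-/

lemma abs_log_rpow_le {t d p β : ℝ} (hp : 0 < p) (hβ : 0 < β) (ht : 0 ≤ t) (htd : t ≤ d) :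
    |Real.log t| ^ p ≤ (p / β) ^ p * t ^ (-β) + |Real.log d| ^ p := by
  have hrest : 0 ≤ (p / β) ^ p * t ^ (-β) := by positivity
  rcases ht.eq_or_lt with rfl | ht
  · rw [Real.log_zero, abs_zero, Real.zero_rpow hp.ne']
    positivity
  rcases lt_or_ge t 1 with ht1 | ht1
  · have hδ : 0 < β / p := by positivity
    have hlog : |Real.log t| ≤ t ^ (-(β / p)) / (β / p) := by
      rw [abs_of_neg (Real.log_neg ht ht1), ← Real.log_inv, Real.rpow_neg ht.le,
        ← Real.inv_rpow ht.le]
      exact Real.log_le_rpow_div (by positivity) hδ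
    calc |Real.log t| ^ p ≤ (t ^ (-(β / p)) / (β / p)) ^ p := by gcongr
      _ = (p / β) ^ p * t ^ (-β) := by
        rw [Real.div_rpow (by positivity) hδ.le, ← Real.rpow_mul ht.le, neg_mul,
          div_mul_cancel₀ _ hp.ne', div_eq_inv_mul, ← Real.inv_rpow hδ.le, inv_div]
      _ ≤ _ := le_add_of_nonneg_right (by positivity)
  · have hlog : |Real.log t| ≤ |Real.log d| := by
      rw [abs_of_nonneg (Real.log_nonneg ht1), abs_of_nonneg (Real.log_nonneg (ht1.trans htd))]
      exact Real.log_le_log ht htd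
    calc |Real.log t| ^ p ≤ |Real.log d| ^ p := by gcongr
      _ ≤ _ := le_add_of_nonneg_left hrest

section BallGrowth

variable {X : Type*} [PseudoMetricSpace X] [MeasurableSpace X] {μ : Measure X} {z : X}
  {M ε : ℝ}

lemma measure_ball_le_of_forall_radius_le [IsProbabilityMeasure μ] {d : ℝ} (hd : 0 < d)
    (hε : 0 ≤ ε)
    (h : ∀ r, 0 < r → r ≤ d → μ (ball z r) ≤ ENNReal.ofReal (M * r ^ ε)) (r : ℝ) (hr : 0 < r) :
    μ (ball z r) ≤ ENNReal.ofReal (max M (d ^ (-ε)) * r ^ ε) := by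
  rcases le_or_gt r d with hrd | hdr
  · exact (h r hr hrd).trans (ENNReal.ofReal_le_ofReal (by gcongr; exact le_max_left _ _))
  · refine prob_le_one.trans (ENNReal.one_le_ofReal.mpr ?_)
    calc (1 : ℝ) = d ^ (-ε) * d ^ ε := by rw [← Real.rpow_add hd]; simp
      _ ≤ max M (d ^ (-ε)) * r ^ ε := by gcongr; exact le_max_right _ _

lemma measure_singleton_eq_zero_of_measure_ball_le (hε : 0 < ε)
    (h : ∀ r, 0 < r → μ (ball z r) ≤ ENNReal.ofReal (M * r ^ ε)) : μ {z} = 0 := by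
  have hlim : Tendsto (fun r : ℝ => ENNReal.ofReal (M * r ^ ε)) (𝓝[>] 0) (𝓝 0) := by
    have : Continuous fun r : ℝ => ENNReal.ofReal (M * r ^ ε) :=
      ENNReal.continuous_ofReal.comp (continuous_const.mul (Real.continuous_rpow_const hε.le))
    simpa [Real.zero_rpow hε.ne'] using this.continuousWithinAt.tendsto (x := 0) (s := Ioi 0)
  refine nonpos_iff_eq_zero.mp (ge_of_tendsto hlim ?_)
  filter_upwards [self_mem_nhdsWithin] with r hr
  exact (measure_mono (singleton_subset_iff.mpr (mem_ball_self hr))).trans (h r hr)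

end BallGrowth

lemma setOf_lt_norm_sub_rpow_neg_subset_ball {E : Type*} [SeminormedAddCommGroup E] (z : E)
    {β t : ℝ} (hβ : 0 < β) (ht : 0 < t) :
    {w | t < ‖z - w‖ ^ (-β)} ⊆ ball z (t ^ (-β)⁻¹) := by
  intro w (hw : t < ‖z - w‖ ^ (-β))
  have hw0 : 0 < ‖z - w‖ := by
    refine (norm_nonneg _).lt_of_ne fun h0 => ?_
    simp only [← h0, Real.zero_rpow (neg_ne_zero.mpr hβ.ne')] at hw
    linarith
  rw [mem_ball, dist_comm, dist_eq_norm]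
  exact (Real.lt_rpow_inv_iff_of_neg hw0 ht (neg_neg_of_pos hβ)).mpr hw

section LogMoments

variable {E : Type*} [NormedAddCommGroup E] [MeasurableSpace E] [BorelSpace E]
  {μ : Measure E} {z : E} {p : ℝ}

lemma lintegral_norm_sub_rpow_neg_le (μ : Measure E) [IsFiniteMeasure μ] (z : E) {β ε M : ℝ}
    (hβ : 0 < β) (hβε : β < ε) (hM : 0 ≤ M)
    (h : ∀ r, 0 < r → μ (ball z r) ≤ ENNReal.ofReal (M * r ^ ε)) :
    ∫⁻ w, ENNReal.ofReal (‖z - w‖ ^ (-β)) ∂μ ≤ μ univ + ENNReal.ofReal (M / (ε / β - 1)) := by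
  have hmeas : Measurable fun w : E => ‖z - w‖ ^ (-β) := by fun_prop
  rw [lintegral_eq_lintegral_meas_lt μ (.of_forall fun w => by positivity) hmeas.aemeasurable,
    ← Ioc_union_Ioi_eq_Ioi zero_le_one, lintegral_union measurableSet_Ioi Ioc_disjoint_Ioi_same]
  gcongr
  · calc ∫⁻ t in Ioc (0 : ℝ) 1, μ {w | t < ‖z - w‖ ^ (-β)}
        ≤ ∫⁻ _ in Ioc (0 : ℝ) 1, μ univ := by gcongr; exact subset_univ _
      _ = μ univ := by simp
  have hlevel : ∀ t ∈ Ioi (1 : ℝ),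
      μ {w | t < ‖z - w‖ ^ (-β)} ≤ ENNReal.ofReal (M * t ^ (-(ε / β))) := by
    intro t ht
    have ht0 : (0 : ℝ) < t := zero_lt_one.trans ht
    refine (measure_mono (setOf_lt_norm_sub_rpow_neg_subset_ball z hβ ht0)).trans
      ((h _ (by positivity)).trans (le_of_eq ?_))
    rw [← Real.rpow_mul ht0.le, inv_neg, neg_mul, inv_mul_eq_div]
  have hexp : -(ε / β) < -1 := by rw [neg_lt_neg_iff, one_lt_div hβ]; exact hβε
  calc ∫⁻ t in Ioi (1 : ℝ), μ {w | t < ‖z - w‖ ^ (-β)}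
      ≤ ∫⁻ t in Ioi (1 : ℝ), ENNReal.ofReal (M * t ^ (-(ε / β))) :=
        setLIntegral_mono (by fun_prop) hlevel
    _ = ENNReal.ofReal (∫ t in Ioi (1 : ℝ), M * t ^ (-(ε / β))) :=
        (ofReal_integral_eq_lintegral_ofReal
          ((integrableOn_Ioi_rpow_of_lt hexp one_pos).const_mul M)
          (ae_restrict_of_forall_mem measurableSet_Ioi fun t ht =>
            mul_nonneg hM (Real.rpow_nonneg (zero_le_one.trans (le_of_lt ht)) _))).symm
    _ = ENNReal.ofReal (M / (ε / β - 1)) := by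
        rw [integral_const_mul, integral_Ioi_rpow_of_lt hexp one_pos, Real.one_rpow,
          neg_div, ← div_neg, neg_add, neg_neg, ← sub_eq_add_neg, mul_one_div]

lemma integrable_abs_log_norm_sub_rpow_and_integral_le [IsProbabilityMeasure μ] {d ε M : ℝ}
    (hp : 0 < p) (hε : 0 < ε) (hM : 0 ≤ M) (hdist : ∀ᵐ w ∂μ, ‖z - w‖ ≤ d)
    (h : ∀ r, 0 < r → μ (ball z r) ≤ ENNReal.ofReal (M * r ^ ε)) :
    Integrable (fun w => |Real.log ‖z - w‖| ^ p) μ ∧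
      ∫ w, |Real.log ‖z - w‖| ^ p ∂μ ≤ (2 * p / ε) ^ p * (1 + M) + |Real.log d| ^ p := by
  set g : E → ℝ := fun w => ‖z - w‖ ^ (-(ε / 2))
  have hg_meas : Measurable g := by fun_prop
  have hg_nonneg : 0 ≤ᵐ[μ] g := .of_forall fun w => by positivity
  have hg_lint : ∫⁻ w, ENNReal.ofReal (g w) ∂μ ≤ ENNReal.ofReal (1 + M) := by
    have := lintegral_norm_sub_rpow_neg_le μ z (half_pos hε) (half_lt_self hε) hM h
    rwa [measure_univ, div_div_cancel₀ hε.ne', show (2 : ℝ) - 1 = 1 by norm_num, div_one,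
      ← ENNReal.ofReal_one, ← ENNReal.ofReal_add zero_le_one hM] at this
  have hg_int : Integrable g μ :=
    ⟨hg_meas.aestronglyMeasurable,
      (hasFiniteIntegral_iff_ofReal hg_nonneg).mpr (hg_lint.trans_lt ENNReal.ofReal_lt_top)⟩
  have hg_le : ∫ w, g w ∂μ ≤ 1 + M := by
    rw [integral_eq_lintegral_of_nonneg_ae hg_nonneg hg_meas.aestronglyMeasurable]
    exact ENNReal.toReal_le_of_le_ofReal (by positivity) hg_lint
  have hdom : ∀ᵐ w ∂μ, |Real.log ‖z - w‖| ^ p ≤ (2 * p / ε) ^ p * g w + |Real.log d| ^ p := by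
    filter_upwards [hdist] with w hw
    have := abs_log_rpow_le hp (half_pos hε) (norm_nonneg (z - w)) hw
    rwa [div_div_eq_mul_div, mul_comm p 2] at this
  have hbound_int : Integrable (fun w => (2 * p / ε) ^ p * g w + |Real.log d| ^ p) μ :=
    (hg_int.const_mul ((2 * p / ε) ^ p)).add (integrable_const (|Real.log d| ^ p))
  have hint : Integrable (fun w => |Real.log ‖z - w‖| ^ p) μ :=
    hbound_int.mono'
      (by fun_prop : Measurable fun w => |Real.log ‖z - w‖| ^ p).aestronglyMeasurable
      (hdom.mono fun w hw => by rwa [Real.norm_of_nonneg (by positivity)])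
  refine ⟨hint, (integral_mono_ae hint hbound_int hdom).trans ?_⟩
  rw [integral_add (hg_int.const_mul _) (integrable_const _), integral_const_mul, integral_const,
    probReal_univ, one_smul]
  gcongr

lemma log_two_rpow_mul_measureReal_ball_le_integral [IsFiniteMeasure μ] {r : ℝ} (hp : 0 ≤ p)
    (hr : r ≤ 1 / 2) (hz : μ {z} = 0) (hint : Integrable (fun w => |Real.log ‖z - w‖| ^ p) μ) :
    Real.log 2 ^ p * μ.real (ball z r) ≤ ∫ w, |Real.log ‖z - w‖| ^ p ∂μ := by
  set s := ball z r \ {z}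
  have hs : MeasurableSet s := measurableSet_ball.diff (measurableSet_singleton z)
  have hlog : ∀ w ∈ s, Real.log 2 ^ p ≤ |Real.log ‖z - w‖| ^ p := by
    rintro w ⟨hw, hwz⟩
    have hw0 : 0 < ‖z - w‖ := norm_pos_iff.mpr (sub_ne_zero.mpr (Ne.symm hwz))
    have hwr : ‖z - w‖ < r := by rwa [← dist_eq_norm, dist_comm]
    have : Real.log 2 ≤ -Real.log ‖z - w‖ := by
      rw [← Real.log_inv]
      exact Real.log_le_log two_pos (by rw [le_inv_comm₀ two_pos hw0]; linarith)
    gcongr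
    exact this.trans (neg_le_abs _)
  calc Real.log 2 ^ p * μ.real (ball z r) = ∫ _ in s, Real.log 2 ^ p ∂μ := by
        rw [setIntegral_const, smul_eq_mul, mul_comm, measureReal_def, measureReal_def,
          measure_sdiff_null hz]
    _ ≤ ∫ w in s, |Real.log ‖z - w‖| ^ p ∂μ :=
        setIntegral_mono_on (integrableOn_const ..) hint.integrableOn hs hlog
    _ ≤ ∫ w, |Real.log ‖z - w‖| ^ p ∂μ :=
        setIntegral_le_integral hint (.of_forall fun w => by positivity)

end LogMoments

theorem statement14_general (K : Set ℂ) (hK : IsCompact K) (hd : 0 < Metric.diam K)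
    (μ : Measure ℂ) (hμ : μ ∈ probOn K)
    (ε₁ ε₂ M₁ M₂ : ℝ) (hε₂ : 0 < ε₂) (hM₁ : 0 < M₁)
    (hreg : ∀ z ∈ K, ∀ r : ℝ, 0 < r → r ≤ Metric.diam K →
      ENNReal.ofReal (M₁ * r ^ ε₁) ≤ μ (Metric.ball z r) ∧
        μ (Metric.ball z r) ≤ ENNReal.ofReal (M₂ * r ^ ε₂))
    (p : ℝ) (hp : 1 ≤ p) :
    ∃ C₁ C₂ : ℝ, 0 < C₁ ∧ 0 < C₂ ∧ ∀ z ∈ K,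
      C₁ ≤ (∫ w, |Real.log (‖z - w‖)| ^ p ∂μ) ∧
        (∫ w, |Real.log (‖z - w‖)| ^ p ∂μ) ≤ C₂ := by
  obtain ⟨hprob, hμK⟩ := hμ
  set d := Metric.diam K
  set M := max M₂ (d ^ (-ε₂))
  set r := min d (1 / 2)
  have hp0 : 0 < p := by linarith
  have hr : 0 < r := lt_min hd one_half_pos
  have hM : 0 ≤ M := (Real.rpow_pos_of_pos hd _).le.trans (le_max_right _ _)
  refine ⟨Real.log 2 ^ p * (M₁ * r ^ ε₁), (2 * p / ε₂) ^ p * (1 + M) + |Real.log d| ^ p,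
    by positivity, by positivity, fun z hz => ?_⟩
  have hball :=
    measure_ball_le_of_forall_radius_le hd hε₂.le fun r hr hrd => (hreg z hz r hr hrd).2
  have hdist : ∀ᵐ w ∂μ, ‖z - w‖ ≤ d := (ae_iff.mpr hμK).mono fun w hw => by
    simpa [dist_eq_norm] using dist_le_diam_of_mem hK.isBounded hz hw
  obtain ⟨hint, hupper⟩ :=
    integrable_abs_log_norm_sub_rpow_and_integral_le hp0 hε₂ hM hdist hball
  refine ⟨?_, hupper⟩
  calc Real.log 2 ^ p * (M₁ * r ^ ε₁) ≤ Real.log 2 ^ p * μ.real (ball z r) := by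
        gcongr
        exact (ENNReal.ofReal_le_iff_le_toReal (measure_ne_top _ _)).mp
          (hreg z hz r hr (min_le_left _ _)).1
    _ ≤ _ := log_two_rpow_mul_measureReal_ball_le_integral hp0.le (min_le_right _ _)
        (measure_singleton_eq_zero_of_measure_ball_le hε₂ hball) hint

/-- If `K` is compact with diameter `d > 0` and `μ` is a probability measure on
`K` with `M₁ r^{ε₁} ≤ μ(B(z,r)) ≤ M₂ r^{ε₂}` for `z ∈ K`, `0 < r ≤ d`, then for every `p ≥ 1`
the moments `∫ |log|z-w||^p dμ(w)` are bounded above and below by positive constants,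
uniformly over `z ∈ K`. -/
theorem statement14 (K : Set ℂ) (hK : IsCompact K) (hd : 0 < Metric.diam K)
    (μ : Measure ℂ) (hμ : μ ∈ probOn K)
    (ε₁ ε₂ M₁ M₂ : ℝ) (hε₁ : 0 < ε₁) (hε₂ : 0 < ε₂) (hM₁ : 0 < M₁) (hM₂ : 0 < M₂)
    (hreg : ∀ z ∈ K, ∀ r : ℝ, 0 < r → r ≤ Metric.diam K →
      ENNReal.ofReal (M₁ * r ^ ε₁) ≤ μ (Metric.ball z r) ∧
        μ (Metric.ball z r) ≤ ENNReal.ofReal (M₂ * r ^ ε₂))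
    (p : ℝ) (hp : 1 ≤ p) :
    ∃ C₁ C₂ : ℝ, 0 < C₁ ∧ 0 < C₂ ∧ ∀ z ∈ K,
      C₁ ≤ (∫ w, |Real.log (‖z - w‖)| ^ p ∂μ) ∧
        (∫ w, |Real.log (‖z - w‖)| ^ p ∂μ) ≤ C₂ :=
  statement14_general K hK hd μ hμ ε₁ ε₂ M₁ M₂ hε₂ hM₁ hreg p hp
end
end

section
/- For every integer n ≥ 1, the open set {z ∈ ℂ : |z^n − 1| < 1} has exactly n connected components. -/
open MeasureTheory Filter Polynomial Metric Set
open scoped Classical ENNReal NNReal Topology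

noncomputable section

/-! The map `z ↦ z ^ n` sends the set onto the disc `B(1, 1)`, which lies in the right half-plane
where the principal branch `w ↦ w ^ (1 / n)` is continuous. Hence `z ↦ z / (z ^ n) ^ (1 / n)` is a
continuous map from the set to the `n`-th roots of unity, a discrete set. Its fibre over `ζ` is the
connected set `ζ · B(1, 1) ^ (1 / n)`, so the connected components are exactly these `n` fibres. -/

theorem Continuous.connectedComponentsLift_bijective {X Y : Type*} [TopologicalSpace X]
    [TopologicalSpace Y] [DiscreteTopology Y] {f : X → Y} (hf : Continuous f)
    (hsurj : Function.Surjective f) (hfib : ∀ y, IsPreconnected (f ⁻¹' {y})) :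
    Function.Bijective hf.connectedComponentsLift := by
  refine ⟨fun a b hab => ?_, fun y => ?_⟩
  · obtain ⟨x, rfl⟩ := ConnectedComponents.surjective_coe a
    obtain ⟨x', rfl⟩ := ConnectedComponents.surjective_coe b
    simp only [Continuous.connectedComponentsLift_apply_coe] at hab
    exact ConnectedComponents.coe_eq_coe.2 <| connectedComponent_eq <|
      (hfib (f x)).subset_connectedComponent rfl hab.symm
  · obtain ⟨x, rfl⟩ := hsurj y
    exact ⟨x, hf.connectedComponentsLift_apply_coe x⟩

theorem card_connectedComponents_eq_of_continuousOn {X Y : Type*} [TopologicalSpace X]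
    [TopologicalSpace Y] {S : Set X} {T : Set Y} (hT : IsDiscrete T) {g : X → Y}
    (hg : ContinuousOn g S) (hmaps : MapsTo g S T) (hsurj : SurjOn g S T)
    (hfib : ∀ y ∈ T, IsPreconnected (S ∩ g ⁻¹' {y})) :
    Nat.card (ConnectedComponents S) = Nat.card T := by
  have := hT.to_subtype
  have hfib' : ∀ y : T, IsPreconnected (hmaps.restrict ⁻¹' {y}) := fun y => by
    rw [← Topology.IsInducing.subtypeVal.isPreconnected_image]
    convert hfib y y.2 using 1
    ext x
    simp [Subtype.ext_iff, and_comm]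
  exact Nat.card_eq_of_bijective _ <| (hg.mapsToRestrict hmaps).connectedComponentsLift_bijective
    (hmaps.restrict_surjective_iff.2 hsurj) hfib'

section PowSubOneLemniscate

variable {n : ℕ}

lemma pow_mem_ball_one_iff {z : ℂ} : z ^ n ∈ ball (1 : ℂ) 1 ↔ ‖z ^ n - 1‖ < 1 := by
  rw [mem_ball, dist_eq_norm]

lemma mem_slitPlane_of_mem_ball_one {w : ℂ} (hw : w ∈ ball (1 : ℂ) 1) : w ∈ Complex.slitPlane := by
  simpa using Complex.mem_slitPlane_of_norm_lt_one (z := w - 1) (mem_ball_iff_norm.1 hw)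

lemma ne_zero_of_mem_ball_one {w : ℂ} (hw : w ∈ ball (1 : ℂ) 1) : w ≠ 0 :=
  Complex.slitPlane_ne_zero (mem_slitPlane_of_mem_ball_one hw)

def rootOfUnityFactor (n : ℕ) (z : ℂ) : ℂ := z / (z ^ n) ^ (n⁻¹ : ℂ)

lemma rootOfUnityFactor_pow (hn : n ≠ 0) {z : ℂ} (hz : z ^ n ≠ 0) :
    rootOfUnityFactor n z ^ n = 1 := by
  rw [rootOfUnityFactor, div_pow, Complex.cpow_nat_inv_pow _ hn, div_self hz]

lemma rootOfUnityFactor_eq_self {ζ : ℂ} (hζ : ζ ^ n = 1) : rootOfUnityFactor n ζ = ζ := by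
  rw [rootOfUnityFactor, hζ, Complex.one_cpow, div_one]

lemma continuousOn_rootOfUnityFactor :
    ContinuousOn (rootOfUnityFactor n) {z : ℂ | ‖z ^ n - 1‖ < 1} := by
  have hslit : ∀ z ∈ {z : ℂ | ‖z ^ n - 1‖ < 1}, z ^ n ∈ Complex.slitPlane := fun z hz =>
    mem_slitPlane_of_mem_ball_one (pow_mem_ball_one_iff.2 hz)
  refine continuousOn_id.div ((continuousOn_pow n).cpow_const hslit) fun z hz => ?_
  exact Complex.cpow_ne_zero_iff.2 (.inl (Complex.slitPlane_ne_zero (hslit z hz)))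

lemma inter_preimage_rootOfUnityFactor (hn : n ≠ 0) {ζ : ℂ} (hζ : ζ ^ n = 1) :
    {z : ℂ | ‖z ^ n - 1‖ < 1} ∩ rootOfUnityFactor n ⁻¹' {ζ} =
      (fun w => ζ * w ^ (n⁻¹ : ℂ)) '' ball 1 1 := by
  ext z
  constructor
  · rintro ⟨hz, hζz⟩
    have hroot : (z ^ n) ^ (n⁻¹ : ℂ) ≠ 0 :=
      Complex.cpow_ne_zero_iff.2 (.inl (ne_zero_of_mem_ball_one (pow_mem_ball_one_iff.2 hz)))
    exact ⟨z ^ n, pow_mem_ball_one_iff.2 hz, ((div_eq_iff hroot).1 hζz).symm⟩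
  · rintro ⟨w, hw, rfl⟩
    have hpow : (ζ * w ^ (n⁻¹ : ℂ)) ^ n = w := by
      rw [mul_pow, hζ, one_mul, Complex.cpow_nat_inv_pow _ hn]
    have hroot : w ^ (n⁻¹ : ℂ) ≠ 0 := Complex.cpow_ne_zero_iff.2 (.inl (ne_zero_of_mem_ball_one hw))
    refine ⟨pow_mem_ball_one_iff.1 (by rwa [hpow]), ?_⟩
    rw [mem_preimage, rootOfUnityFactor, hpow, mul_div_cancel_right₀ _ hroot, mem_singleton_iff]

lemma isPreconnected_inter_preimage_rootOfUnityFactor (hn : n ≠ 0) {ζ : ℂ} (hζ : ζ ^ n = 1) :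
    IsPreconnected ({z : ℂ | ‖z ^ n - 1‖ < 1} ∩ rootOfUnityFactor n ⁻¹' {ζ}) := by
  rw [inter_preimage_rootOfUnityFactor hn hζ]
  exact (convex_ball 1 1).isPreconnected.image _ <| continuousOn_const.mul <|
    continuousOn_id.cpow_const fun w hw => mem_slitPlane_of_mem_ball_one hw

end PowSubOneLemniscate

/-- For every `n ≥ 1`, the set `{z : |z^n - 1| < 1}` has exactly `n` connected
components. -/
theorem statement18 (n : ℕ) (hn : 1 ≤ n) :
    Nat.card (ConnectedComponents {z : ℂ | ‖z ^ n - 1‖ < 1}) = n := by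
  have hn0 : n ≠ 0 := by omega
  have mem_roots {ζ : ℂ} : ζ ∈ (nthRootsFinset n (1 : ℂ) : Set ℂ) ↔ ζ ^ n = 1 :=
    mem_nthRootsFinset (by omega) 1
  rw [card_connectedComponents_eq_of_continuousOn (nthRootsFinset n (1 : ℂ)).finite_toSet.isDiscrete
    continuousOn_rootOfUnityFactor, Nat.card_coe_set_eq, ncard_coe_finset,
    (Complex.isPrimitiveRoot_exp n hn0).card_nthRootsFinset]
  · exact fun z hz => mem_roots.2 <| rootOfUnityFactor_pow hn0 <|
      ne_zero_of_mem_ball_one (pow_mem_ball_one_iff.2 hz)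
  · intro ζ hζ
    refine ⟨ζ, ?_, rootOfUnityFactor_eq_self (mem_roots.1 hζ)⟩
    simp [mem_roots.1 hζ]
  · exact fun ζ hζ => isPreconnected_inter_preimage_rootOfUnityFactor hn0 (mem_roots.1 hζ)
end
end
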